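/- arXiv:1506.00156 — 4 statements merged into one kernel-verified Lean document; each statement's English description precedes it below -/
import Mathlib

section
/- Let F be a finitely generated free group and A a subgroup of F. Then there exists a free factor C of F such that A ≤ C and A fills C. -/
/-!
Choose a free factor `K ⊇ A` of `F` of minimal first Betti number `b₁ = dim_ℚ H₁(-; ℚ)`.
If `K` split relative to `A` as `C ∗ D` with `A` in a conjugate of `C`, that conjugate would be a
free factor of `K`, hence of `F`, containing `A`; and since `D` is a nontrivial free group
(Nielsen–Schreier), `b₁(C) < b₁(C) + b₁(D) ≤ b₁(K)`, contradicting minimality.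
-/

/-- `C` is a free factor of the group `G`: there is a subgroup `D` of `G` such that the
homomorphism `C ∗ D →* G` induced by the two inclusion maps is an isomorphism. -/
def Subgroup.IsFreeFactor {G : Type*} [Group G] (C : Subgroup G) : Prop :=
  ∃ D : Subgroup G, Function.Bijective ⇑(Monoid.Coprod.lift C.subtype D.subtype)

/-- The group `G` splits as a free product relative to its subgroup `H`: there are
nontrivial subgroups `C` and `D` of `G` such that the homomorphism `C ∗ D →* G` induced
by the inclusions is an isomorphism, and `H` is contained in a conjugate of `C` or in a
conjugate of `D`. -/
def SplitsFreeProductRel (G : Type*) [Group G] (H : Subgroup G) : Prop :=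
  ∃ C D : Subgroup G, C ≠ ⊥ ∧ D ≠ ⊥ ∧
    Function.Bijective ⇑(Monoid.Coprod.lift C.subtype D.subtype) ∧
    ((∃ g : G, ∀ h ∈ H, g * h * g⁻¹ ∈ C) ∨ (∃ g : G, ∀ h ∈ H, g * h * g⁻¹ ∈ D))

/-- The subgroup `H` fills the group `G` if `G` does not split as a free product
relative to `H`. -/
def FillsGroup (G : Type*) [Group G] (H : Subgroup G) : Prop :=
  ¬ SplitsFreeProductRel G H

/-- For subgroups `H, K` of an ambient group (with `H ≤ K` in applications):
`H` fills `K`. -/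
def Fills {Γ : Type*} [Group Γ] (H K : Subgroup Γ) : Prop :=
  FillsGroup ↥K (H.subgroupOf K)


open Monoid Function

namespace Subgroup

variable {G G' M N : Type*} [Group G] [Group G'] [Group M] [Group N]

def IsInternalCoprod (C D : Subgroup G) : Prop :=
  Bijective (Coprod.lift C.subtype D.subtype)

namespace IsInternalCoprod

variable {C D : Subgroup G}

noncomputable def mulEquiv (h : C.IsInternalCoprod D) : Coprod C D ≃* G :=
  MulEquiv.ofBijective _ h

lemma symm (h : C.IsInternalCoprod D) : D.IsInternalCoprod C := by
  have : ⇑(Coprod.lift D.subtype C.subtype) =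
      Coprod.lift C.subtype D.subtype ∘ Coprod.swap D C :=
    funext fun x => (Coprod.lift_swap _ _ x).symm
  rw [IsInternalCoprod, this]
  exact h.comp Coprod.swap_bijective

lemma fg_left (hG : Group.FG G) (h : C.IsInternalCoprod D) : Group.FG C :=
  Group.fg_of_surjective (f := Coprod.fst.comp h.mulEquiv.symm.toMonoidHom)
    (Coprod.fst_surjective.comp h.mulEquiv.symm.surjective)

end IsInternalCoprod

lemma isInternalCoprod_range_inl_range_inr (φ : Coprod M N ≃* G) :
    (φ.toMonoidHom.comp Coprod.inl).range.IsInternalCoprod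
      (φ.toMonoidHom.comp Coprod.inr).range := by
  set m := MulEquiv.coprodCongr
    (MonoidHom.ofInjective (f := φ.toMonoidHom.comp Coprod.inl)
      (φ.injective.comp Coprod.inl_injective))
    (MonoidHom.ofInjective (f := φ.toMonoidHom.comp Coprod.inr)
      (φ.injective.comp Coprod.inr_injective))
  have hcomp : (Coprod.lift (φ.toMonoidHom.comp Coprod.inl).range.subtype
      (φ.toMonoidHom.comp Coprod.inr).range.subtype).comp m.toMonoidHom = φ.toMonoidHom :=
    Coprod.hom_ext rfl rfl
  rw [IsInternalCoprod, ← Bijective.of_comp_iff _ m.bijective]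
  convert φ.bijective using 1
  exact congrArg DFunLike.coe hcomp

lemma IsInternalCoprod.map {C D : Subgroup G} (h : C.IsInternalCoprod D) (e : G ≃* G') :
    (C.map e.toMonoidHom).IsInternalCoprod (D.map e.toMonoidHom) := by
  have hl : (h.mulEquiv.trans e).toMonoidHom.comp Coprod.inl = e.toMonoidHom.comp C.subtype := rfl
  have hr : (h.mulEquiv.trans e).toMonoidHom.comp Coprod.inr = e.toMonoidHom.comp D.subtype := rfl
  have := isInternalCoprod_range_inl_range_inr (h.mulEquiv.trans e)
  rwa [hl, hr, ← MonoidHom.map_range, ← MonoidHom.map_range, range_subtype,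
    range_subtype] at this

lemma isFreeFactor_top : (⊤ : Subgroup G).IsFreeFactor := by
  set φ : Coprod G PUnit.{1} ≃* G := MulEquiv.coprodPUnit G
  have hφ : φ.toMonoidHom.comp Coprod.inl = .id G := rfl
  have := isInternalCoprod_range_inl_range_inr φ
  rw [hφ, MonoidHom.range_eq_top_of_surjective _ surjective_id] at this
  exact ⟨_, this⟩

lemma IsFreeFactor.fg (hG : Group.FG G) {C : Subgroup G} (hC : C.IsFreeFactor) :
    Group.FG C := by
  obtain ⟨D, hCD : C.IsInternalCoprod D⟩ := hC
  exact hCD.fg_left hG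

lemma IsFreeFactor.map_subtype {K : Subgroup G} (hK : K.IsFreeFactor) {C : Subgroup K}
    (hC : C.IsFreeFactor) : (C.map K.subtype).IsFreeFactor := by
  obtain ⟨D₁, hKD₁ : K.IsInternalCoprod D₁⟩ := hK
  obtain ⟨D₂, hCD₂ : C.IsInternalCoprod D₂⟩ := hC
  set φ : Coprod C (Coprod D₂ D₁) ≃* G := (MulEquiv.coprodAssoc C D₂ D₁).symm.trans
    ((MulEquiv.coprodCongr hCD₂.mulEquiv (MulEquiv.refl D₁)).trans hKD₁.mulEquiv)
  have hφ : φ.toMonoidHom.comp Coprod.inl = K.subtype.comp C.subtype := rfl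
  have := isInternalCoprod_range_inl_range_inr φ
  rw [hφ, ← MonoidHom.map_range, range_subtype] at this
  exact ⟨_, this⟩

lemma IsInternalCoprod.exists_le_of_conj_mem {C D : Subgroup G} (h : C.IsInternalCoprod D)
    (hD : D ≠ ⊥) {H : Subgroup G} (g : G) (hg : ∀ x ∈ H, g * x * g⁻¹ ∈ C) :
    ∃ C' D' : Subgroup G, D' ≠ ⊥ ∧ C'.IsInternalCoprod D' ∧ H ≤ C' := by
  refine ⟨C.map (MulAut.conj g⁻¹).toMonoidHom, D.map (MulAut.conj g⁻¹).toMonoidHom, ?_,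
    h.map _, fun x hx => ?_⟩
  · rwa [Ne, map_eq_bot_iff_of_injective _ (MulAut.conj g⁻¹).injective]
  · rw [mem_map_equiv, MulAut.conj_symm_apply, inv_inv]
    exact hg x hx

end Subgroup

lemma SplitsFreeProductRel.exists_isInternalCoprod_le {G : Type*} [Group G] {H : Subgroup G}
    (h : SplitsFreeProductRel G H) :
    ∃ C D : Subgroup G, D ≠ ⊥ ∧ C.IsInternalCoprod D ∧ H ≤ C := by
  obtain ⟨C, D, hC, hD, hCD, ⟨g, hg⟩ | ⟨g, hg⟩⟩ := h
  · exact Subgroup.IsInternalCoprod.exists_le_of_conj_mem hCD hD g hg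
  · exact Subgroup.IsInternalCoprod.exists_le_of_conj_mem
      (Subgroup.IsInternalCoprod.symm hCD) hC g hg

open scoped TensorProduct

abbrev RatAbelianization (G : Type*) [Group G] : Type _ := ℚ ⊗[ℤ] Additive (Abelianization G)

namespace RatAbelianization

variable {G H K : Type*} [Group G] [Group H] [Group K]

noncomputable def map (f : G →* H) : RatAbelianization G →ₗ[ℚ] RatAbelianization H :=
  (MonoidHom.toAdditive (Abelianization.map f)).toIntLinearMap.baseChange ℚ

lemma map_map (f : G →* H) (g : H →* K) (x : RatAbelianization G) :
    map g (map f x) = map (g.comp f) x := by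
  rw [map, map, map, ← LinearMap.comp_apply, ← LinearMap.baseChange_comp,
    ← Abelianization.map_comp]
  rfl

@[simp]
lemma map_id (x : RatAbelianization G) : map (MonoidHom.id G) x = x := by
  rw [map, Abelianization.map_id]
  exact congrArg (· x) (LinearMap.baseChange_id (R := ℤ) (A := ℚ)
    (M := Additive (Abelianization G)))

@[simp]
lemma map_one (x : RatAbelianization G) : map (1 : G →* H) x = 0 := by
  have : Abelianization.map (1 : G →* H) = 1 := Abelianization.hom_ext _ _ rfl
  rw [map, this]
  exact congrArg (· x) (LinearMap.baseChange_zero (R := ℤ) (A := ℚ)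
    (M := Additive (Abelianization G)) (N := Additive (Abelianization H)))

lemma finite_of_fg (hG : Group.FG G) : Module.Finite ℚ (RatAbelianization G) := by
  have : Group.FG (Abelianization G) := Group.fg_of_surjective (f := Abelianization.of)
    fun x => QuotientGroup.induction_on x fun g => ⟨g, rfl⟩
  have : Module.Finite ℤ (Additive (Abelianization G)) :=
    Module.Finite.iff_addGroup_fg.mpr (GroupFG.iff_add_fg.mp this)
  infer_instance

lemma nontrivial_of_surjective_int {f : G →* Multiplicative ℤ} (hf : Surjective f) :
    Nontrivial (RatAbelianization G) := by
  set φ : Additive (Abelianization G) →ₗ[ℤ] ℤ :=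
    (MonoidHom.toAdditiveLeft (Abelianization.lift f)).toIntLinearMap
  have hφ : Surjective φ := fun n => by
    obtain ⟨g, hg⟩ := hf (Multiplicative.ofAdd n)
    exact ⟨Additive.ofMul (Abelianization.of g), by simp [φ, hg]⟩
  have hψ : Surjective (TensorProduct.rid ℤ ℚ ∘ φ.lTensor ℚ) :=
    (TensorProduct.rid ℤ ℚ).surjective.comp (LinearMap.lTensor_surjective ℚ hφ)
  exact hψ.nontrivial

end RatAbelianization

/-- The first Betti number `dim_ℚ H₁(G; ℚ)`; `finrank` makes it `0` when this dimension is
infinite, so it is only meaningful for finitely generated `G`. -/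
noncomputable def firstBettiNumber (G : Type*) [Group G] : ℕ :=
  Module.finrank ℚ (RatAbelianization G)

section FirstBettiNumber

variable {G H : Type*} [Group G] [Group H]

lemma firstBettiNumber_congr (e : G ≃* H) : firstBettiNumber G = firstBettiNumber H :=
  ((MulEquiv.toAdditive e.abelianizationCongr).toIntLinearEquiv.baseChange ℤ ℚ _ _).finrank_eq

lemma firstBettiNumber_add_le_coprod (hG : Group.FG (Coprod G H)) :
    firstBettiNumber G + firstBettiNumber H ≤ firstBettiNumber (Coprod G H) := by
  have := RatAbelianization.finite_of_fg hG
  have := RatAbelianization.finite_of_fg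
    (Group.fg_of_surjective (f := (Coprod.fst : Coprod G H →* G)) Coprod.fst_surjective)
  have := RatAbelianization.finite_of_fg
    (Group.fg_of_surjective (f := (Coprod.snd : Coprod G H →* H)) Coprod.snd_surjective)
  let p := (RatAbelianization.map (Coprod.fst : Coprod G H →* G)).prod
    (RatAbelianization.map (Coprod.snd : Coprod G H →* H))
  have hp : Surjective p := fun ⟨a, b⟩ =>
    ⟨RatAbelianization.map Coprod.inl a + RatAbelianization.map Coprod.inr b, by
      simp [p, RatAbelianization.map_map]⟩
  rw [firstBettiNumber, firstBettiNumber, firstBettiNumber, ← Module.finrank_prod]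
  exact LinearMap.finrank_le_finrank_of_surjective hp

lemma one_le_firstBettiNumber [IsFreeGroup G] [Nontrivial G] (hG : Group.FG G) :
    1 ≤ firstBettiNumber G := by
  have : Nonempty (IsFreeGroup.Generators G) := by
    by_contra! hempty
    -- `FreeGroup` on an empty type is trivial
    exact not_subsingleton G (IsFreeGroup.toFreeGroup G).injective.subsingleton
  obtain ⟨x⟩ := this
  have := RatAbelianization.finite_of_fg hG
  have := RatAbelianization.nontrivial_of_surjective_int
    (f := IsFreeGroup.lift fun _ => Multiplicative.ofAdd (1 : ℤ)) fun n =>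
      ⟨IsFreeGroup.of x ^ n.toAdd, by simp [← ofAdd_zsmul]⟩
  exact Module.finrank_pos

end FirstBettiNumber

lemma Subgroup.IsInternalCoprod.firstBettiNumber_lt {G : Type*} [Group G] [IsFreeGroup G]
    (hG : Group.FG G) {C D : Subgroup G} (h : C.IsInternalCoprod D) (hD : D ≠ ⊥) :
    firstBettiNumber C < firstBettiNumber G := by
  have : Nontrivial D := (Subgroup.nontrivial_iff_ne_bot D).mpr hD
  have hD₁ := one_le_firstBettiNumber (h.symm.fg_left hG)
  have hsum := firstBettiNumber_add_le_coprod
    (Group.fg_of_surjective (f := h.mulEquiv.symm.toMonoidHom) h.mulEquiv.symm.surjective)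
  rw [firstBettiNumber_congr h.mulEquiv] at hsum
  omega

/-- **Existence part of Lemma 2.2**: if `F` is a finitely generated free group and
`A ≤ F` a subgroup, then there is a free factor `C` of `F` with `A ≤ C` which is
filled by `A`. -/
theorem exists_free_factor_core (F : Type*) [Group F] [IsFreeGroup F]
    (hF : Group.FG F) (A : Subgroup F) :
    ∃ C : Subgroup F, C.IsFreeFactor ∧ A ≤ C ∧ Fills A C := by
  obtain ⟨K, ⟨hK, hAK⟩, hmin⟩ :=
    (measure fun K : Subgroup F => firstBettiNumber K).wf.has_min
    {K | K.IsFreeFactor ∧ A ≤ K} ⟨⊤, Subgroup.isFreeFactor_top, le_top⟩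
  refine ⟨K, hK, hAK, fun hsplit => ?_⟩
  obtain ⟨C, D, hD, hCD, hAC⟩ := hsplit.exists_isInternalCoprod_le
  refine hmin (C.map K.subtype)
    ⟨hK.map_subtype ⟨D, hCD⟩, fun a ha => ⟨⟨a, hAK ha⟩, hAC ha, rfl⟩⟩ ?_
  calc firstBettiNumber (C.map K.subtype)
      = firstBettiNumber C :=
        (firstBettiNumber_congr (C.equivMapOfInjective _ K.subtype_injective)).symm
    _ < firstBettiNumber K := hCD.firstBettiNumber_lt (hK.fg hF) hD
end

section
/- Let K be a finitely generated free group, G a subgroup of K, and H a nontrivial subgroup of G. Suppose C is a free factor of G with H ≤ C such that H fills C, and C' is a free factor of K with H ≤ C' such that H fills C'. Then C ≤ C'. -/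
/-!
Proof idea. If `C'` is a free factor of the free group `K`, then `C' ⊓ C` is a free factor of `C`
(a case of the Kurosh subgroup theorem). It contains `H ≠ 1`, so if `C ⊄ C'` its complement in
`C` is nontrivial as well and `C` splits as a free product relative to `H`, contradicting that `H`
fills `C`.

For the Kurosh step take a basis `X` of `K` such that `C'` is generated by a subset `S ⊆ X`, and
look at the Schreier graph of `K` acting on `K ⧸ C`. Choose a spanning tree whose restriction to
the component of the base point in the `S`-labelled subgraph is a spanning tree of that component.
The Schreier generators of `C` read off from the non-tree edges then split into those on
`S`-edges of that component, which generate `C' ⊓ C`, and the others, which generate a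
complement: labelling every edge by its generator in the free product of the two subgroups
and reading labels along closed paths gives a homomorphism from `C` inverse to the multiplication
map.
-/

open Monoid Subgroup
open scoped Monoid.Coprod

theorem Subgroup.surjective_coprod_lift_subtype_iff {Γ : Type*} [Group Γ] {B D : Subgroup Γ} :
    Function.Surjective (Coprod.lift B.subtype D.subtype) ↔ B ⊔ D = ⊤ := by
  rw [← MonoidHom.range_eq_top, Coprod.range_lift, range_subtype, range_subtype]

theorem Subgroup.isFreeFactor_closure_of_coprod_hom {Γ : Type*} [Group Γ] {L₁ L₂ : Set Γ}
    (hgen : closure (L₁ ∪ L₂) = ⊤) (Φ : Γ →* closure L₁ ∗ closure L₂)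
    (h₁ : ∀ x (hx : x ∈ L₁), Φ x = Coprod.inl ⟨x, subset_closure hx⟩)
    (h₂ : ∀ x (hx : x ∈ L₂), Φ x = Coprod.inr ⟨x, subset_closure hx⟩) :
    (closure L₁).IsFreeFactor := by
  have hΦ : Φ.comp (Coprod.lift (closure L₁).subtype (closure L₂).subtype) = MonoidHom.id _ :=
    Coprod.hom_ext (MonoidHom.eq_of_eqOn_dense (closure_preimage_eq_top L₁) fun x hx => h₁ x hx)
      (MonoidHom.eq_of_eqOn_dense (closure_preimage_eq_top L₂) fun x hx => h₂ x hx)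
  refine ⟨closure L₂, Function.LeftInverse.injective (g := Φ) (DFunLike.congr_fun hΦ), ?_⟩
  rw [surjective_coprod_lift_subtype_iff, ← closure_union, hgen]

section MulEquiv

variable {Γ Γ' : Type*} [Group Γ] [Group Γ']

theorem Subgroup.IsFreeFactor.map_mulEquiv {B : Subgroup Γ} (hB : B.IsFreeFactor)
    (e : Γ ≃* Γ') :
    (B.map (e : Γ →* Γ')).IsFreeFactor := by
  obtain ⟨D, hD⟩ := hB
  refine ⟨D.map (e : Γ →* Γ'), ?_⟩
  have h : (Coprod.lift (B.map (e : Γ →* Γ')).subtype (D.map (e : Γ →* Γ')).subtype).comp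
      (MulEquiv.coprodCongr (e.subgroupMap B) (e.subgroupMap D)).toMonoidHom =
      (e : Γ →* Γ').comp (Coprod.lift B.subtype D.subtype) :=
    Coprod.hom_ext (by ext; rfl) (by ext; rfl)
  refine (Function.Bijective.of_comp_iff _
    (MulEquiv.coprodCongr (e.subgroupMap B) (e.subgroupMap D)).bijective).mp ?_
  have hb : Function.Bijective ⇑((e : Γ →* Γ').comp (Coprod.lift B.subtype D.subtype)) :=
    e.bijective.comp hD
  rwa [← h] at hb

theorem Subgroup.IsFreeFactor.map_subgroupOf {A C : Subgroup Γ}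
    (h : (A.subgroupOf C).IsFreeFactor) (e : Γ ≃* Γ') :
    ((A.map (e : Γ →* Γ')).subgroupOf (C.map (e : Γ →* Γ'))).IsFreeFactor := by
  convert h.map_mulEquiv (e.subgroupMap C) using 1
  ext ⟨_, y, hy, rfl⟩
  simp only [Subgroup.mem_subgroupOf, Subgroup.mem_map, Subtype.ext_iff,
    MulEquiv.coe_subgroupMap_apply, EmbeddingLike.apply_eq_iff_eq, MonoidHom.coe_coe]
  exact ⟨fun ⟨_, hA, hy'⟩ => ⟨⟨y, hy⟩, hy' ▸ hA, rfl⟩,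
    fun ⟨z, hz, hzy⟩ => ⟨z, hz, hzy⟩⟩

end MulEquiv

namespace FreeGroupBasis

variable {ι ι' M N : Type*} [Group M] [Group N]

def coprod (b : FreeGroupBasis ι M) (b' : FreeGroupBasis ι' N) :
    FreeGroupBasis (ι ⊕ ι') (M ∗ N) :=
  .ofRepr <| MonoidHom.toMulEquiv
    (Coprod.lift ((FreeGroup.map Sum.inl).comp b.repr.toMonoidHom)
      ((FreeGroup.map Sum.inr).comp b'.repr.toMonoidHom))
    (FreeGroup.lift (Sum.elim (Coprod.inl ∘ b) (Coprod.inr ∘ b')))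
    (Coprod.hom_ext (b.ext_hom _ _ fun i => by simp) (b'.ext_hom _ _ fun i => by simp))
    (FreeGroup.ext_hom _ _ fun i => by cases i <;> simp)

theorem coprod_apply_inl (b : FreeGroupBasis ι M) (b' : FreeGroupBasis ι' N) (i : ι) :
    b.coprod b' (Sum.inl i) = Coprod.inl (b i) :=
  FreeGroup.lift_apply_of (f := Sum.elim (Coprod.inl ∘ b) (Coprod.inr ∘ b')) (x := Sum.inl i)

end FreeGroupBasis

universe u in
theorem Subgroup.IsFreeFactor.exists_mulEquiv_map_closure {K : Type u} [Group K] [IsFreeGroup K]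
    {A : Subgroup K} (hA : A.IsFreeFactor) :
    ∃ (ι : Type u) (e : FreeGroup ι ≃* K) (s : Set ι),
      (closure (FreeGroup.of '' s)).map (e : FreeGroup ι →* K) = A := by
  obtain ⟨D, hD⟩ := hA
  let bA := IsFreeGroup.basis A
  let b := (bA.coprod (IsFreeGroup.basis D)).map (MulEquiv.ofBijective _ hD)
  refine ⟨_, b.repr.symm, Set.range Sum.inl, ?_⟩
  have : b.repr.symm.toMonoidHom.comp (FreeGroup.map Sum.inl) =
      A.subtype.comp bA.repr.symm.toMonoidHom :=
    FreeGroup.ext_hom _ _ fun i => by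
      change b (Sum.inl i) = ((bA i : A) : K)
      simp [b, FreeGroupBasis.coprod_apply_inl]
  rw [← MulEquiv.toMonoidHom_eq_coe, ← FreeGroup.range_map, MonoidHom.map_range, this,
    MonoidHom.range_comp, MonoidHom.range_eq_top_of_surjective _ (MulEquiv.surjective _),
    ← MonoidHom.range_eq_map, range_subtype]

theorem SimpleGraph.Reachable.exists_adj_dist_lt {V : Type*} {G : SimpleGraph V} {u v : V}
    (h : G.Reachable u v) (hne : u ≠ v) : ∃ w, G.Adj w v ∧ G.dist u w < G.dist u v := by
  obtain ⟨p, hp⟩ := h.exists_walk_length_eq_dist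
  have hlen := p.length_reverse
  generalize p.reverse = q at hlen
  cases q with
  | nil => exact absurd rfl hne
  | cons hadj q =>
    refine ⟨_, hadj.symm, ?_⟩
    have := G.dist_le q.reverse
    simp only [Walk.length_cons, Walk.length_reverse] at hlen this
    omega

open FreeGroup (of)

namespace Schreier

variable {X : Type*} (C : Subgroup (FreeGroup X))

def root : FreeGroup X ⧸ C := ((1 : FreeGroup X) : FreeGroup X ⧸ C)

def graph (T : Set X) : SimpleGraph (FreeGroup X ⧸ C) :=
  SimpleGraph.fromRel fun u v => ∃ z ∈ T, of z • u = v

variable {C}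

theorem smul_root (g : FreeGroup X) : g • root C = g := by
  rw [root, MulAction.Quotient.smul_mk, smul_eq_mul, mul_one]

theorem smul_root_eq_root_iff {g : FreeGroup X} : g • root C = root C ↔ g ∈ C := by
  rw [← MulAction.mem_stabilizer_iff, root, MulAction.stabilizer_quotient]

def IsLetter (T : Set X) (e : FreeGroup X) : Prop := ∃ z ∈ T, e = of z ∨ e = (of z)⁻¹

theorem IsLetter.mono {T T' : Set X} (h : T ⊆ T') {e : FreeGroup X} (he : IsLetter T e) :
    IsLetter T' e :=
  let ⟨z, hz, hez⟩ := he
  ⟨z, h hz, hez⟩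

theorem IsLetter.mem_closure {T : Set X} {e : FreeGroup X} (he : IsLetter T e) :
    e ∈ closure (of '' T) := by
  obtain ⟨z, hz, rfl | rfl⟩ := he
  · exact subset_closure ⟨z, hz, rfl⟩
  · exact inv_mem (subset_closure ⟨z, hz, rfl⟩)

theorem graph_adj {T : Set X} {u v : FreeGroup X ⧸ C} :
    (graph C T).Adj u v ↔ u ≠ v ∧ ∃ e, IsLetter T e ∧ e • u = v := by
  rw [graph, SimpleGraph.fromRel_adj]
  refine and_congr_right fun _ => ⟨?_, ?_⟩
  · rintro (⟨z, hz, rfl⟩ | ⟨z, hz, rfl⟩)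
    · exact ⟨of z, ⟨z, hz, .inl rfl⟩, rfl⟩
    · exact ⟨(of z)⁻¹, ⟨z, hz, .inr rfl⟩, inv_smul_smul _ _⟩
  · rintro ⟨e, ⟨z, hz, rfl | rfl⟩, rfl⟩
    · exact .inl ⟨z, hz, rfl⟩
    · exact .inr ⟨z, hz, smul_inv_smul _ _⟩

theorem graph_reachable_of_smul {T : Set X} {z : X} (hz : z ∈ T) (v : FreeGroup X ⧸ C) :
    (graph C T).Reachable v (of z • v) := by
  by_cases h : v = of z • v
  · rw [← h]
  · exact (graph_adj.mpr ⟨h, of z, ⟨z, hz, .inl rfl⟩, rfl⟩).reachable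

theorem graph_reachable_smul {T : Set X} {g : FreeGroup X} (hg : g ∈ closure (of '' T))
    (v : FreeGroup X ⧸ C) : (graph C T).Reachable v (g • v) := by
  induction hg using closure_induction generalizing v with
  | mem _ hx =>
    obtain ⟨z, hz, rfl⟩ := hx
    exact graph_reachable_of_smul hz v
  | one => rw [one_smul]
  | mul g h _ _ ihg ihh => rw [mul_smul]; exact (ihh v).trans (ihg _)
  | inv g _ ih => simpa using (ih (g⁻¹ • v)).symm

theorem graph_univ_reachable_root (v : FreeGroup X ⧸ C) :
    (graph C Set.univ).Reachable (root C) v := by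
  obtain ⟨g, rfl⟩ := QuotientGroup.mk_surjective v
  rw [← smul_root]
  refine graph_reachable_smul ?_ _
  rw [Set.image_univ, FreeGroup.closure_range_of]
  exact mem_top g

variable (S : Set X)

-- Ranking the `S`-component of the root below everything else makes the tree grown along
-- decreasing rank restrict to a spanning tree of that component made of `S`-edges.
open Classical in
noncomputable def rank (v : FreeGroup X ⧸ C) : ℕ ×ₗ ℕ :=
  if (graph C S).Reachable (root C) v then toLex (0, (graph C S).dist (root C) v)
  else toLex (1, (graph C Set.univ).dist (root C) v)

theorem exists_parentStep {v : FreeGroup X ⧸ C} (hv : v ≠ root C) :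
    ∃ e, IsLetter Set.univ e ∧
      ((graph C S).Reachable (root C) v → e ∈ closure (of '' S)) ∧
      rank S (e⁻¹ • v) < rank S v := by
  by_cases hP : (graph C S).Reachable (root C) v
  · obtain ⟨u, hadj, hlt⟩ := hP.exists_adj_dist_lt (Ne.symm hv)
    obtain ⟨-, e, he, rfl⟩ := graph_adj.mp hadj
    refine ⟨e, he.mono (Set.subset_univ S), fun _ => he.mem_closure, ?_⟩
    rw [inv_smul_smul, rank, rank, if_pos (hP.trans hadj.symm.reachable), if_pos hP,
      Prod.Lex.toLex_lt_toLex]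
    exact .inr ⟨rfl, hlt⟩
  · obtain ⟨u, hadj, hlt⟩ := (graph_univ_reachable_root v).exists_adj_dist_lt (Ne.symm hv)
    obtain ⟨-, e, he, rfl⟩ := graph_adj.mp hadj
    refine ⟨e, he, fun h => absurd h hP, ?_⟩
    rw [inv_smul_smul, rank, rank, if_neg hP]
    split_ifs
    · exact Prod.Lex.toLex_lt_toLex.mpr (.inl zero_lt_one)
    · exact Prod.Lex.toLex_lt_toLex.mpr (.inr ⟨rfl, hlt⟩)

open Classical in
noncomputable def parentStep (v : FreeGroup X ⧸ C) : FreeGroup X :=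
  if hv : v = root C then 1 else (exists_parentStep S hv).choose

theorem isLetter_parentStep {v : FreeGroup X ⧸ C} (hv : v ≠ root C) :
    IsLetter Set.univ (parentStep S v) := by
  rw [parentStep, dif_neg hv]
  exact (exists_parentStep S hv).choose_spec.1

theorem parentStep_mem_closure {v : FreeGroup X ⧸ C} (hv : v ≠ root C)
    (hP : (graph C S).Reachable (root C) v) : parentStep S v ∈ closure (of '' S) := by
  rw [parentStep, dif_neg hv]
  exact (exists_parentStep S hv).choose_spec.2.1 hP

theorem rank_inv_parentStep_smul_lt {v : FreeGroup X ⧸ C} (hv : v ≠ root C) :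
    rank S ((parentStep S v)⁻¹ • v) < rank S v := by
  rw [parentStep, dif_neg hv]
  exact (exists_parentStep S hv).choose_spec.2.2

theorem tree_induction {motive : FreeGroup X ⧸ C → Prop} (base : motive (root C))
    (step : ∀ v, v ≠ root C → motive ((parentStep S v)⁻¹ • v) → motive v)
    (v : FreeGroup X ⧸ C) : motive v := by
  by_cases hv : v = root C
  · exact hv ▸ base
  · exact step v hv (tree_induction base step _)
termination_by rank S v
decreasing_by exact rank_inv_parentStep_smul_lt S hv

open Classical in
noncomputable def treeWord (v : FreeGroup X ⧸ C) : FreeGroup X :=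
  if v = root C then 1 else parentStep S v * treeWord ((parentStep S v)⁻¹ • v)
termination_by rank S v
decreasing_by exact rank_inv_parentStep_smul_lt S ‹_›

theorem treeWord_root : treeWord S (root C) = 1 := by
  rw [treeWord, if_pos rfl]

theorem treeWord_of_ne {v : FreeGroup X ⧸ C} (hv : v ≠ root C) :
    treeWord S v = parentStep S v * treeWord S ((parentStep S v)⁻¹ • v) := by
  rw [treeWord, if_neg hv]

theorem treeWord_smul_root (v : FreeGroup X ⧸ C) : treeWord S v • root C = v := by
  induction v using tree_induction S with
  | base => rw [treeWord_root, one_smul]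
  | step v hv ih => rw [treeWord_of_ne S hv, mul_smul, ih, smul_inv_smul]

theorem treeWord_mem_closure {v : FreeGroup X ⧸ C} (hv : (graph C S).Reachable (root C) v) :
    treeWord S v ∈ closure (of '' S) := by
  induction v using tree_induction S with
  | base => rw [treeWord_root]; exact one_mem _
  | step v hv' ih =>
    have he := parentStep_mem_closure S hv' hv
    rw [treeWord_of_ne S hv']
    exact mul_mem he (ih (hv.trans (graph_reachable_smul (inv_mem he) v)))

def IsTreeEdge (u : FreeGroup X ⧸ C) (z : X) : Prop :=
  (of z • u ≠ root C ∧ parentStep S (of z • u) = of z) ∨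
    (u ≠ root C ∧ parentStep S u = (of z)⁻¹)

noncomputable def cocycle (g : FreeGroup X) (v : FreeGroup X ⧸ C) : C :=
  ⟨(treeWord S (g • v))⁻¹ * g * treeWord S v, by
    rw [← smul_root_eq_root_iff, mul_smul, mul_smul, treeWord_smul_root, inv_smul_eq_iff,
      treeWord_smul_root]⟩

theorem coe_cocycle (g : FreeGroup X) (v : FreeGroup X ⧸ C) :
    (cocycle S g v : FreeGroup X) = (treeWord S (g • v))⁻¹ * g * treeWord S v := rfl

theorem cocycle_one (v : FreeGroup X ⧸ C) : cocycle S 1 v = 1 := by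
  ext; simp [coe_cocycle]

theorem cocycle_mul (g h : FreeGroup X) (v : FreeGroup X ⧸ C) :
    cocycle S (g * h) v = cocycle S g (h • v) * cocycle S h v := by
  ext; simp only [coe_cocycle, Subgroup.coe_mul, mul_smul]; group

theorem cocycle_inv (g : FreeGroup X) (v : FreeGroup X ⧸ C) :
    cocycle S g⁻¹ v = (cocycle S g (g⁻¹ • v))⁻¹ := by
  ext; simp only [coe_cocycle, Subgroup.coe_inv, smul_inv_smul]; group

theorem cocycle_root (c : C) : cocycle S c (root C) = c := by
  ext
  rw [coe_cocycle, smul_root_eq_root_iff.mpr c.2, treeWord_root]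
  group

theorem cocycle_of_eq_one {u : FreeGroup X ⧸ C} {z : X} (h : IsTreeEdge S u z) :
    cocycle S (of z) u = 1 := by
  ext
  rw [coe_cocycle, OneMemClass.coe_one]
  rcases h with ⟨hu, he⟩ | ⟨hu, he⟩
  · rw [treeWord_of_ne S hu, he, inv_smul_smul]; group
  · rw [treeWord_of_ne S hu, he, inv_inv]; group

def generators (T : Set X) : Set C :=
  {c | ∃ z ∈ T, ∃ u, (graph C T).Reachable (root C) u ∧ cocycle S (of z) u = c}

theorem cocycle_mem_closure_generators {T : Set X} {g : FreeGroup X}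
    (hg : g ∈ closure (of '' T)) {v : FreeGroup X ⧸ C} (hv : (graph C T).Reachable (root C) v) :
    cocycle S g v ∈ closure (generators S T) := by
  induction hg using closure_induction generalizing v with
  | mem _ hx =>
    obtain ⟨z, hz, rfl⟩ := hx
    exact subset_closure ⟨z, hz, v, hv, rfl⟩
  | one => rw [cocycle_one]; exact one_mem _
  | mul g h _ hh ihg ihh =>
    rw [cocycle_mul]
    exact mul_mem (ihg (hv.trans (graph_reachable_smul hh v))) (ihh hv)
  | inv g hg ih =>
    rw [cocycle_inv]
    exact inv_mem (ih (hv.trans (graph_reachable_smul (inv_mem hg) v)))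

theorem closure_generators_univ :
    closure (generators S (Set.univ : Set X)) = (⊤ : Subgroup C) := by
  refine eq_top_iff.mpr fun c _ => cocycle_root S c ▸ ?_
  refine cocycle_mem_closure_generators S ?_ (graph_univ_reachable_root _)
  rw [Set.image_univ, FreeGroup.closure_range_of]
  exact mem_top _

theorem closure_generators_self :
    closure (generators S S) = (closure (of '' S)).subgroupOf C := by
  refine le_antisymm (closure_le _ |>.mpr ?_) fun c hc => cocycle_root S c ▸
    cocycle_mem_closure_generators S (mem_subgroupOf.mp hc) (SimpleGraph.Reachable.refl _)
  rintro _ ⟨z, hz, u, hu, rfl⟩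
  have hz' : of z ∈ closure (of '' S) := subset_closure ⟨z, hz, rfl⟩
  exact mul_mem (mul_mem (inv_mem (treeWord_mem_closure S
    (hu.trans (graph_reachable_smul hz' u)))) hz') (treeWord_mem_closure S hu)

section PathLabel

variable {M : Type*} [Group M] (f : (FreeGroup X ⧸ C) → X → M)

noncomputable def labelLift :
    FreeGroup X →* ((FreeGroup X ⧸ C) → M) ⋊[mulAutArrow] FreeGroup X :=
  FreeGroup.lift fun z => ⟨fun v => f ((of z)⁻¹ • v) z, of z⟩

theorem labelLift_right (g : FreeGroup X) : (labelLift f g).right = g :=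
  DFunLike.congr_fun (show SemidirectProduct.rightHom.comp (labelLift f) = MonoidHom.id _ from
    FreeGroup.ext_hom _ _ fun z => by simp [labelLift]) g

-- The product of the labels `f u z` of the edges `u ⟶ of z • u` along the path spelled by `g`
-- that ends at `v`.
noncomputable def pathLabel (g : FreeGroup X) : (FreeGroup X ⧸ C) → M := (labelLift f g).left

theorem pathLabel_one (v : FreeGroup X ⧸ C) : pathLabel f 1 v = 1 := by
  rw [pathLabel, map_one]; rfl

theorem pathLabel_mul (g h : FreeGroup X) (v : FreeGroup X ⧸ C) :
    pathLabel f (g * h) v = pathLabel f g v * pathLabel f h (g⁻¹ • v) := by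
  rw [pathLabel, map_mul, SemidirectProduct.mul_left, labelLift_right]; rfl

theorem pathLabel_of (z : X) (v : FreeGroup X ⧸ C) :
    pathLabel f (of z) v = f ((of z)⁻¹ • v) z := by
  rw [pathLabel, labelLift, FreeGroup.lift_apply_of]

theorem pathLabel_inv (g : FreeGroup X) (v : FreeGroup X ⧸ C) :
    pathLabel f g⁻¹ v = (pathLabel f g (g • v))⁻¹ := by
  have := pathLabel_mul f g g⁻¹ (g • v)
  rw [mul_inv_cancel, pathLabel_one, inv_smul_smul] at this
  exact eq_inv_of_mul_eq_one_right this.symm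

noncomputable def labelHom : C →* M where
  toFun c := pathLabel f c (root C)
  map_one' := pathLabel_one f _
  map_mul' c d := by
    rw [Subgroup.coe_mul, pathLabel_mul, smul_root_eq_root_iff.mpr (inv_mem c.2)]

variable {f} (hf : ∀ u z, IsTreeEdge S u z → f u z = 1)
include hf

theorem pathLabel_treeWord (v : FreeGroup X ⧸ C) : pathLabel f (treeWord S v) v = 1 := by
  induction v using tree_induction S with
  | base => rw [treeWord_root, pathLabel_one]
  | step v hv ih =>
    rw [treeWord_of_ne S hv, pathLabel_mul, ih, mul_one]
    obtain ⟨z, -, he | he⟩ := isLetter_parentStep S hv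
    · rw [he, pathLabel_of]
      exact hf _ _ (.inl ⟨by rwa [smul_inv_smul], by rwa [smul_inv_smul]⟩)
    · rw [he, pathLabel_inv, pathLabel_of, inv_smul_smul, hf v z (.inr ⟨hv, he⟩), inv_one]

theorem labelHom_cocycle_of (u : FreeGroup X ⧸ C) (z : X) :
    labelHom f (cocycle S (of z) u) = f u z := by
  rw [labelHom, MonoidHom.coe_mk, OneHom.coe_mk, coe_cocycle, mul_assoc, pathLabel_mul,
    pathLabel_inv, inv_inv, treeWord_smul_root, pathLabel_treeWord S hf, inv_one, one_mul,
    pathLabel_mul, pathLabel_of, inv_smul_smul, pathLabel_treeWord S hf, mul_one]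

end PathLabel

end Schreier

open Schreier in
theorem FreeGroup.isFreeFactor_subgroupOf_closure_image_of {X : Type*} (S : Set X)
    (C : Subgroup (FreeGroup X)) : ((closure (of '' S)).subgroupOf C).IsFreeFactor := by
  classical
  let IsGood (u : FreeGroup X ⧸ C) (z : X) : Prop := z ∈ S ∧ (graph C S).Reachable (root C) u
  let bad : Set C := {c | ∃ u z, ¬ IsGood u z ∧ cocycle S (of z) u = c}
  let f (u : FreeGroup X ⧸ C) (z : X) :
      Subgroup.closure (generators S S) ∗ Subgroup.closure bad :=
    if h : IsGood u z then .inl ⟨_, subset_closure ⟨z, h.1, u, h.2, rfl⟩⟩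
    else .inr ⟨_, subset_closure ⟨u, z, h, rfl⟩⟩
  have hf (u : FreeGroup X ⧸ C) (z : X) (h : IsTreeEdge S u z) : f u z = 1 := by
    have h1 := cocycle_of_eq_one S h
    simp only [f]
    split_ifs
    exacts [(congrArg Coprod.inl (Subtype.ext h1)).trans (_root_.map_one _),
      (congrArg Coprod.inr (Subtype.ext h1)).trans (_root_.map_one _)]
  rw [← closure_generators_self S]
  refine isFreeFactor_closure_of_coprod_hom (L₂ := bad) ?_ (labelHom f) ?_ ?_
  · rw [eq_top_iff, ← closure_generators_univ S, closure_le]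
    rintro _ ⟨z, -, u, -, rfl⟩
    by_cases h : IsGood u z
    · exact subset_closure (.inl ⟨z, h.1, u, h.2, rfl⟩)
    · exact subset_closure (.inr ⟨u, z, h, rfl⟩)
  · rintro _ ⟨z, hz, u, hu, rfl⟩
    rw [labelHom_cocycle_of S hf]
    exact dif_pos ⟨hz, hu⟩
  · rintro _ ⟨u, z, h, rfl⟩
    rw [labelHom_cocycle_of S hf]
    exact dif_neg h

theorem Subgroup.IsFreeFactor.subgroupOf {K : Type*} [Group K] [IsFreeGroup K] {A : Subgroup K}
    (hA : A.IsFreeFactor) (C : Subgroup K) : (A.subgroupOf C).IsFreeFactor := by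
  obtain ⟨ι, e, s, rfl⟩ := hA.exists_mulEquiv_map_closure
  have hC : (C.map (e.symm : K →* FreeGroup ι)).map (e : FreeGroup ι →* K) = C := by
    rw [Subgroup.map_map]; simp
  have := (FreeGroup.isFreeFactor_subgroupOf_closure_image_of s
    (C.map (e.symm : K →* FreeGroup ι))).map_subgroupOf e
  rwa [hC] at this

theorem core_map_monotone_general (K : Type*) [Group K] [IsFreeGroup K]
    (H : Subgroup K) (hH : H ≠ ⊥)
    (C : Subgroup K)
    (hHC : H ≤ C) (hfill : Fills H C)
    (C' : Subgroup K) (hC'ff : C'.IsFreeFactor) (hHC' : H ≤ C') :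
    C ≤ C' := by
  obtain ⟨D, hD⟩ := hC'ff.subgroupOf C
  by_contra hCC'
  refine hfill ⟨C'.subgroupOf C, D, ?_, ?_, hD, .inl ⟨1, fun h hh => ?_⟩⟩
  · exact fun h => hH (disjoint_self.mp ((subgroupOf_eq_bot.mp h).mono hHC' hHC))
  · rintro rfl
    exact hCC' (subgroupOf_eq_top.mp (by simpa using surjective_coprod_lift_subtype_iff.mp hD.2))
  · simpa [mem_subgroupOf] using hHC' hh

/-- **Order preservation of the core map (2.2)**: let `K` be a finitely generated free
group, `G ≤ K`, and `H ≤ G` nontrivial. If `C` is a free factor of `G` containing `H`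
with `H` filling `C`, and `C'` is a free factor of `K` containing `H` with `H` filling
`C'`, then `C ≤ C'`. -/
theorem core_map_monotone (K : Type*) [Group K] [IsFreeGroup K] (hK : Group.FG K)
    (G H : Subgroup K) (hHG : H ≤ G) (hH : H ≠ ⊥)
    (C : Subgroup K) (hCG : C ≤ G) (hCff : (C.subgroupOf G).IsFreeFactor)
    (hHC : H ≤ C) (hfill : Fills H C)
    (C' : Subgroup K) (hC'ff : C'.IsFreeFactor) (hHC' : H ≤ C') (hfill' : Fills H C') :
    C ≤ C' :=
  core_map_monotone_general K H hH C hHC hfill C' hC'ff hHC'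
end

section
/- Let g ≥ 1 be an integer and let F be the free group freely generated by x₁, y₁, …, x_g, y_g. Then F does not split as a free product relative to the cyclic subgroup generated by the element ∏_{i=1}^{g} [x_i, y_i], where [x,y] = x y x⁻¹ y⁻¹; equivalently, ∏_{i=1}^{g} [x_i, y_i] is not contained in any proper free factor of F. -/
open scoped commutatorElement

/-- The word `∏ i, [xᵢ, yᵢ]` in the free group on `x₁, y₁, …, x_g, y_g`, where
`xᵢ = FreeGroup.of (Sum.inl i)` and `yᵢ = FreeGroup.of (Sum.inr i)` and `[x, y]`
is the commutator `x * y * x⁻¹ * y⁻¹`. -/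
def surfaceWord (g : ℕ) : FreeGroup (Fin g ⊕ Fin g) :=
  (List.ofFn fun i : Fin g =>
    ⁅(FreeGroup.of (Sum.inl i) : FreeGroup (Fin g ⊕ Fin g)), FreeGroup.of (Sum.inr i)⁆).prod

/-- The upper unitriangular matrix `[[1, a, c], [0, 1, b], [0, 0, 1]]` over `R`. -/
@[ext]
structure Heisenberg (R : Type*) where
  a : R
  b : R
  c : R

namespace Heisenberg

variable {R : Type*} [Ring R]

instance : Mul (Heisenberg R) := ⟨fun x y => ⟨x.a + y.a, x.b + y.b, x.c + y.c + x.a * y.b⟩⟩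
instance : One (Heisenberg R) := ⟨⟨0, 0, 0⟩⟩
instance : Inv (Heisenberg R) := ⟨fun x => ⟨-x.a, -x.b, x.a * x.b - x.c⟩⟩

@[simp] lemma mul_a (x y : Heisenberg R) : (x * y).a = x.a + y.a := rfl
@[simp] lemma mul_b (x y : Heisenberg R) : (x * y).b = x.b + y.b := rfl
@[simp] lemma mul_c (x y : Heisenberg R) : (x * y).c = x.c + y.c + x.a * y.b := rfl
@[simp] lemma one_a : (1 : Heisenberg R).a = 0 := rfl
@[simp] lemma one_b : (1 : Heisenberg R).b = 0 := rfl
@[simp] lemma one_c : (1 : Heisenberg R).c = 0 := rfl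
@[simp] lemma inv_a (x : Heisenberg R) : x⁻¹.a = -x.a := rfl
@[simp] lemma inv_b (x : Heisenberg R) : x⁻¹.b = -x.b := rfl
@[simp] lemma inv_c (x : Heisenberg R) : x⁻¹.c = x.a * x.b - x.c := rfl

instance : Group (Heisenberg R) where
  mul_assoc x y z := by ext <;> simp only [mul_a, mul_b, mul_c, mul_add, add_mul] <;> abel
  one_mul x := by ext <;> simp
  mul_one x := by ext <;> simp
  inv_mul_cancel x := by ext <;> simp

def fstHom : Heisenberg R →* Multiplicative R where
  toFun x := .ofAdd x.a
  map_one' := rfl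
  map_mul' _ _ := rfl

def sndHom : Heisenberg R →* Multiplicative R where
  toFun x := .ofAdd x.b
  map_one' := rfl
  map_mul' _ _ := rfl

@[simp] lemma commutatorElement_a (x y : Heisenberg R) : ⁅x, y⁆.a = 0 := by
  simp [commutatorElement_def]

@[simp] lemma commutatorElement_c (x y : Heisenberg R) : ⁅x, y⁆.c = x.a * y.b - y.a * x.b := by
  simp only [commutatorElement_def, mul_a, mul_c, inv_a, inv_b, inv_c]; noncomm_ring

lemma conj_eq_self {y : Heisenberg R} (ha : y.a = 0) (hb : y.b = 0) (x : Heisenberg R) :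
    x * y * x⁻¹ = y := by
  ext
  · simp [ha]
  · simp [hb]
  · simp only [mul_a, mul_c, inv_b, inv_c, ha, hb]; noncomm_ring

lemma list_prod_c (L : List (Heisenberg R)) (hL : ∀ x ∈ L, x.a = 0) :
    L.prod.c = (L.map c).sum := by
  induction L with
  | nil => rfl
  | cons x L ih =>
    simp [ih fun y hy => hL y (List.mem_cons_of_mem x hy), hL x List.mem_cons_self]

variable {G : Type*} [Group G]

lemma c_eq_zero_of_mem_retract (Φ : G →* Heisenberg R) {C : Subgroup G} (r : G →* C)
    (hr : ∀ c : C, r c = c) (hΦ : ∀ c ∈ C, (Φ c).a = 0) {w : G} (hwC : w ∈ C)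
    (hw : w ∈ commutator G) : (Φ w).c = 0 := by
  -- `a` vanishes on `C`, so there `c` is additive and thus kills commutators pulled back by `r`.
  let cHom : C →* Multiplicative R :=
    { toFun := fun x => .ofAdd (Φ x).c
      map_one' := by simp
      map_mul' := fun x y => by simp [hΦ x x.2] }
  have := Abelianization.commutator_subset_ker (cHom.comp r) hw
  rwa [MonoidHom.mem_ker, MonoidHom.comp_apply, show r w = ⟨w, hwC⟩ from hr ⟨w, hwC⟩] at this

lemma conj_c_of_mem_commutator (Φ : G →* Heisenberg R) {w : G} (hw : w ∈ commutator G)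
    (x : G) : (Φ (x * w * x⁻¹)).c = (Φ w).c := by
  have ha : (Φ w).a = 0 :=
    ofAdd_eq_one.mp (Abelianization.commutator_subset_ker (fstHom.comp Φ) hw)
  have hb : (Φ w).b = 0 :=
    ofAdd_eq_one.mp (Abelianization.commutator_subset_ker (sndHom.comp Φ) hw)
  rw [map_mul, map_mul, map_inv, conj_eq_self ha hb]

end Heisenberg

lemma IsFreeGroup.exists_monoidHom_int_ne_one (H : Type*) [Group H] [IsFreeGroup H]
    [Nontrivial H] : ∃ ψ : H →* Multiplicative ℤ, ψ ≠ 1 := by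
  obtain ⟨t⟩ : Nonempty (IsFreeGroup.Generators H) := by
    by_contra hempty
    rw [not_nonempty_iff] at hempty
    obtain ⟨x, hx⟩ := exists_ne (1 : H)
    exact hx (DFunLike.congr_fun (IsFreeGroup.ext_hom (f := .id H) (g := 1) isEmptyElim) x)
  classical
  refine ⟨IsFreeGroup.lift fun s => .ofAdd (if s = t then 1 else 0), fun h => ?_⟩
  simpa using DFunLike.congr_fun h (IsFreeGroup.of t)

namespace Subgroup

open Monoid.Coprod

variable {G : Type*} [Group G] {C D : Subgroup G}

lemma bijective_lift_subtype_swap (h : Function.Bijective (lift C.subtype D.subtype)) :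
    Function.Bijective (lift D.subtype C.subtype) := by
  rw [← lift_comp_swap, MonoidHom.coe_comp]
  exact h.comp ⟨swap_injective, fun x => ⟨swap _ _ x, swap_swap x⟩⟩

lemma eq_top_of_bijective_lift_subtype (h : Function.Bijective (lift C.subtype D.subtype))
    (hD : D = ⊥) : C = ⊤ := by
  have := range_lift C.subtype D.subtype
  rwa [MonoidHom.range_eq_top.mpr h.2, range_subtype, range_subtype, hD, sup_bot_eq,
    eq_comm] at this

lemma exists_retractions_of_bijective_lift_subtype
    (h : Function.Bijective (lift C.subtype D.subtype)) :
    ∃ (p : G →* C) (q : G →* D), (∀ c : C, p c = c) ∧ (∀ c : C, q c = 1) ∧ ∀ d : D, q d = d := by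
  let e := MulEquiv.ofBijective _ h
  have he_inl (c : C) : e.symm c = inl c :=
    e.symm_apply_eq.mpr (lift_apply_inl C.subtype D.subtype c).symm
  have he_inr (d : D) : e.symm d = inr d :=
    e.symm_apply_eq.mpr (lift_apply_inr C.subtype D.subtype d).symm
  exact ⟨fst.comp e.symm.toMonoidHom, snd.comp e.symm.toMonoidHom,
    fun c => by simp [he_inl], fun c => by simp [he_inl], fun d => by simp [he_inr]⟩

end Subgroup

namespace FreeGroup

variable {S R : Type*} [Ring R]

def heisenbergLift (α β : FreeGroup S →* Multiplicative R) : FreeGroup S →* Heisenberg R :=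
  FreeGroup.lift fun s => ⟨(α (of s)).toAdd, (β (of s)).toAdd, 0⟩

@[simp] lemma heisenbergLift_of (α β : FreeGroup S →* Multiplicative R) (s : S) :
    heisenbergLift α β (of s) = ⟨(α (of s)).toAdd, (β (of s)).toAdd, 0⟩ :=
  lift_apply_of

lemma heisenbergLift_a (α β : FreeGroup S →* Multiplicative R) (u : FreeGroup S) :
    (heisenbergLift α β u).a = (α u).toAdd := by
  have : Heisenberg.fstHom.comp (heisenbergLift α β) = α := FreeGroup.ext_hom _ _ fun s => by
    simp [Heisenberg.fstHom]
  exact congrArg Multiplicative.toAdd (DFunLike.congr_fun this u)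

lemma heisenbergLift_surfaceWord_c {g : ℕ}
    (α β : FreeGroup (Fin g ⊕ Fin g) →* Multiplicative R) :
    (heisenbergLift α β (surfaceWord g)).c =
      ∑ k, ((α (of (.inl k))).toAdd * (β (of (.inr k))).toAdd -
        (α (of (.inr k))).toAdd * (β (of (.inl k))).toAdd) := by
  rw [surfaceWord, map_list_prod, List.map_ofFn,
    Heisenberg.list_prod_c _ (by simp [List.mem_ofFn]), List.map_ofFn, List.sum_ofFn]
  simp

lemma eq_one_of_heisenbergLift_surfaceWord_c {g : ℕ}
    (α : FreeGroup (Fin g ⊕ Fin g) →* Multiplicative R)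
    (h : ∀ β, (heisenbergLift α β (surfaceWord g)).c = 0) : α = 1 := by
  classical
  let coord (s : Fin g ⊕ Fin g) : FreeGroup (Fin g ⊕ Fin g) →* Multiplicative R :=
    lift fun t => .ofAdd (if t = s then 1 else 0)
  refine ext_hom _ _ fun s => ?_
  have := h (coord s.swap)
  rw [heisenbergLift_surfaceWord_c] at this
  rcases s with k | k <;> simpa [coord] using this

end FreeGroup

lemma surfaceWord_mem_commutator (g : ℕ) :
    surfaceWord g ∈ commutator (FreeGroup (Fin g ⊕ Fin g)) := by
  refine Subgroup.list_prod_mem _ fun _ hy => ?_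
  obtain ⟨k, rfl⟩ := List.mem_ofFn.mp hy
  exact Subgroup.commutator_mem_commutator (Subgroup.mem_top _) (Subgroup.mem_top _)

open Heisenberg FreeGroup in
theorem conj_surfaceWord_not_mem {g : ℕ} {C D : Subgroup (FreeGroup (Fin g ⊕ Fin g))}
    (h : Function.Bijective (Monoid.Coprod.lift C.subtype D.subtype)) (hD : D ≠ ⊥)
    (x : FreeGroup (Fin g ⊕ Fin g)) : x * surfaceWord g * x⁻¹ ∉ C := by
  intro hxC
  obtain ⟨p, q, hp, hqC, hqD⟩ := Subgroup.exists_retractions_of_bijective_lift_subtype h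
  have : Nontrivial D := (Subgroup.nontrivial_iff_ne_bot D).mpr hD
  obtain ⟨ψ, hψ⟩ := IsFreeGroup.exists_monoidHom_int_ne_one D
  have hα : ψ.comp q = 1 := eq_one_of_heisenbergLift_surfaceWord_c _ fun β => by
    rw [← conj_c_of_mem_commutator _ (surfaceWord_mem_commutator g) x]
    refine c_eq_zero_of_mem_retract _ p hp (fun c hc => ?_) hxC
      (Subgroup.Normal.conj_mem inferInstance _ (surfaceWord_mem_commutator g) x)
    simp [heisenbergLift_a, hqC ⟨c, hc⟩]
  exact hψ <| MonoidHom.ext fun d => by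
    simpa [hqD] using DFunLike.congr_fun hα (d : FreeGroup (Fin g ⊕ Fin g))

theorem surface_boundary_fills_general (g : ℕ) :
    FillsGroup (FreeGroup (Fin g ⊕ Fin g)) (Subgroup.zpowers (surfaceWord g)) ∧
    ∀ C : Subgroup (FreeGroup (Fin g ⊕ Fin g)),
      C.IsFreeFactor → C ≠ ⊤ → surfaceWord g ∉ C := by
  have hw := Subgroup.mem_zpowers (surfaceWord g)
  refine ⟨?_, fun C ⟨D, h⟩ hC hwC => ?_⟩
  · rintro ⟨C, D, hC, hD, h, ⟨x, hx⟩ | ⟨x, hx⟩⟩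
    · exact conj_surfaceWord_not_mem h hD x (hx _ hw)
    · exact conj_surfaceWord_not_mem (Subgroup.bijective_lift_subtype_swap h) hC x (hx _ hw)
  · exact conj_surfaceWord_not_mem h
      (fun hD => hC (Subgroup.eq_top_of_bijective_lift_subtype h hD)) 1 (by simpa using hwC)

/-- **The boundary fills the surface group** (used in the proof of Lemma 6.4): for
`g ≥ 1`, the free group on `x₁, y₁, …, x_g, y_g` does not split as a free product
relative to the cyclic subgroup generated by `∏ i, [xᵢ, yᵢ]`; equivalently, this
element lies in no proper free factor. -/
theorem surface_boundary_fills (g : ℕ) (hg : 1 ≤ g) :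
    FillsGroup (FreeGroup (Fin g ⊕ Fin g)) (Subgroup.zpowers (surfaceWord g)) ∧
    ∀ C : Subgroup (FreeGroup (Fin g ⊕ Fin g)),
      C.IsFreeFactor → C ≠ ⊤ → surfaceWord g ∉ C :=
  surface_boundary_fills_general g
end

section
/- For every integer g ≥ 1, the group G_g is not a free group. -/
/-- Generators for the group `G_g`: the generator `a_{k, 2i+1}` (odd-indexed, `1 ≤ 2i+1 ≤ 2g`)
is encoded as `(k, i, false)` and the generator `a_{k, 2i+2}` (even-indexed) as
`(k, i, true)`; in particular `a_{k,1}` is encoded as `(k, 0, false)`. -/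
abbrev GropeGenerator (g : ℕ) : Type := ℕ × Fin g × Bool

open scoped commutatorElement

/-- The relator words of `G_g`: for each `k ∈ ℕ`, the relator
`a_{k,1}⁻¹ · ∏_{i=1}^{g} [a_{k+1,2i-1}, a_{k+1,2i}]`, expressing the relation
`a_{k,1} = ∏_{i=1}^{g} [a_{k+1,2i-1}, a_{k+1,2i}]`. -/
def gropeRels (g : ℕ) : Set (FreeGroup (GropeGenerator g)) :=
  { r | ∃ (k : ℕ) (h : 0 < g),
      r = (FreeGroup.of ((k, ⟨0, h⟩, false) : GropeGenerator g))⁻¹ *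
        (List.ofFn fun i : Fin g =>
          ⁅(FreeGroup.of ((k + 1, i, false) : GropeGenerator g) :
              FreeGroup (GropeGenerator g)),
            FreeGroup.of ((k + 1, i, true) : GropeGenerator g)⁆).prod }

/-- The group `G_g`, presented with generators `a_{k,i}` (`k ∈ ℕ`, `1 ≤ i ≤ 2g`) and,
for each `k ∈ ℕ`, the single relation `a_{k,1} = ∏_{i=1}^{g} [a_{k+1,2i-1}, a_{k+1,2i}]`. -/
def GropeGroup (g : ℕ) : Type := PresentedGroup (gropeRels g)

noncomputable instance (g : ℕ) : Group (GropeGroup g) :=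
  inferInstanceAs (Group (PresentedGroup (gropeRels g)))

/-!
Send `a_{k,1}` to the translation by `2⁻ᵏ` and `a_{k,2}` to the reflection `-1` of `ℚ ⋊ {±1}`,
and all other generators to `1`; since `⁅t, -1⁆ = t²` for a translation `t`, the relations hold.
If `G_g` were free, this homomorphism would lift along `(ℕ →₀ ℤ) ⋊ {±1} → ℚ ⋊ {±1}`,
`eₖ ↦ 2⁻ᵏ`. The lift still sends each `a_{k,1}` to a translation `x_k` and each `a_{k,2}` to a
reflection, so the relations force `x_k = 2 x_{k+1}` in `ℕ →₀ ℤ`. Then `x_0` is divisible by every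
power of `2`, hence zero, although it maps to `1`.
-/

open Multiplicative SemidirectProduct

section SignExt

variable (A : Type*) [AddCommGroup A]

def signAut : ℤˣ →* MulAut (Multiplicative A) :=
  (MulAutMultiplicative A).symm.toMonoidHom.comp (DistribMulAction.toAddAut ℤˣ A)

@[simp]
lemma signAut_apply (u : ℤˣ) (x : Multiplicative A) : signAut A u x = ofAdd (u • x.toAdd) :=
  rfl

abbrev SignExt : Type _ := Multiplicative A ⋊[signAut A] ℤˣ

variable {A}

lemma SignExt.inl_left_of_right_eq_one {w : SignExt A} (hw : w.right = 1) : inl w.left = w := by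
  ext <;> simp [hw]

lemma SignExt.commutatorElement_inl_of_right_eq_one (x : Multiplicative A) {w : SignExt A}
    (hw : w.right = 1) : ⁅(inl x : SignExt A), w⁆ = 1 := by
  ext <;> simp [commutatorElement_def, hw]

lemma SignExt.commutatorElement_inl_of_right_eq_neg_one (x : Multiplicative A) {w : SignExt A}
    (hw : w.right = -1) : ⁅(inl x : SignExt A), w⁆ = inl (x ^ 2) := by
  ext
  · simp [commutatorElement_def, hw, pow_two]
    abel
  · simp [commutatorElement_def, hw, -map_pow]

def SignExt.map {B : Type*} [AddCommGroup B] (p : A →+ B) : SignExt A →* SignExt B :=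
  SemidirectProduct.map (AddMonoidHom.toMultiplicative p) (MonoidHom.id ℤˣ) fun u => by
    ext x
    simp [Units.smul_def, map_zsmul]

end SignExt

theorem IsFreeGroup.exists_lift_of_range_le {G W Q : Type*} [Group G] [IsFreeGroup G] [Group W]
    [Group Q] (p : W →* Q) (f : G →* Q) (hf : f.range ≤ p.range) : ∃ f' : G →* W, p.comp f' = f := by
  choose w hw using fun a => hf ⟨IsFreeGroup.of a, rfl⟩
  exact ⟨IsFreeGroup.lift w, IsFreeGroup.ext_hom fun a => by simp [hw]⟩

theorem Finsupp.eq_zero_of_forall_pow_smul {α : Type*} {n : ℕ} (hn : n ≠ 1) (x : α →₀ ℤ)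
    (h : ∀ j, ∃ y : α →₀ ℤ, x = n ^ j • y) : x = 0 := by
  ext m
  by_contra hxm
  obtain ⟨j, hj⟩ := Int.finiteMultiplicity_iff (a := n).mpr ⟨by simpa using hn, hxm⟩
  obtain ⟨y, rfl⟩ := h (j + 1)
  exact hj ⟨y m, by simp [Finsupp.smul_apply]⟩

lemma List.prod_ofFn_eq_head {M : Type*} [Monoid M] {n : ℕ} (hn : 0 < n) (f : Fin n → M)
    (hf : ∀ i : Fin n, (i : ℕ) ≠ 0 → f i = 1) : (List.ofFn f).prod = f ⟨0, hn⟩ := by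
  obtain ⟨n, rfl⟩ := Nat.exists_eq_add_one_of_ne_zero hn.ne'
  rw [List.ofFn_succ, List.prod_cons, List.prod_eq_one, mul_one]
  · rfl
  · simp only [List.mem_ofFn, forall_exists_index]
    rintro _ i rfl
    exact hf i.succ (by simp)

namespace GropeGroup

variable {g : ℕ}

open FreeGroup (of)

def relator (hg : 0 < g) (k : ℕ) : FreeGroup (GropeGenerator g) :=
  (of (k, ⟨0, hg⟩, false))⁻¹ *
    (List.ofFn fun i : Fin g => ⁅of (k + 1, i, false), of (k + 1, i, true)⁆).prod

lemma relator_mem_gropeRels (hg : 0 < g) (k : ℕ) : relator hg k ∈ gropeRels g :=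
  ⟨k, hg, rfl⟩

def sign (g : ℕ) : FreeGroup (GropeGenerator g) →* ℤˣ :=
  FreeGroup.lift fun q => if (q.2.1 : ℕ) = 0 ∧ q.2.2 then -1 else 1

variable {A : Type*} [AddCommGroup A]

lemma map_relator_eq_one_iff (τ : FreeGroup (GropeGenerator g) →* SignExt A)
    (hτ : rightHom.comp τ = sign g) (hg : 0 < g) (k : ℕ) :
    τ (relator hg k) = 1 ↔
      (τ (of (k, ⟨0, hg⟩, false))).left.toAdd =
        2 • (τ (of (k + 1, ⟨0, hg⟩, false))).left.toAdd := by
  have hright (q) : (τ (of q)).right = sign g (of q) := congr($hτ (of q))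
  have hinl (k') (i : Fin g) (b : Bool) (hib : ¬((i : ℕ) = 0 ∧ b)) :
      inl (τ (of (k', i, b))).left = τ (of (k', i, b)) :=
    SignExt.inl_left_of_right_eq_one (by simp [hright, sign, hib])
  have hprod : (List.ofFn fun i : Fin g => τ ⁅of (k + 1, i, false), of (k + 1, i, true)⁆).prod =
      inl ((τ (of (k + 1, ⟨0, hg⟩, false))).left ^ 2) := by
    rw [List.prod_ofFn_eq_head hg]
    · rw [map_commutatorElement, ← hinl _ _ _ (by simp)]
      exact SignExt.commutatorElement_inl_of_right_eq_neg_one _ (by simp [hright, sign])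
    · intro i hi
      rw [map_commutatorElement, ← hinl _ _ _ (by simp)]
      exact SignExt.commutatorElement_inl_of_right_eq_one _ (by simp [hright, sign, hi])
  have hrelator : τ (relator hg k) = (inl (τ (of (k, ⟨0, hg⟩, false))).left)⁻¹ *
      inl ((τ (of (k + 1, ⟨0, hg⟩, false))).left ^ 2) := by
    rw [relator, map_mul, map_inv, map_list_prod, List.map_ofFn, Function.comp_def, hprod,
      hinl _ _ _ (by simp)]
  rw [hrelator, inv_mul_eq_one, inl_inj, ← toAdd.injective.eq_iff, toAdd_pow, eq_comm]

theorem map_of_first_eq_one {α : Type*} (τ : FreeGroup (GropeGenerator g) →* SignExt (α →₀ ℤ))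
    (hτ : rightHom.comp τ = sign g) (hrels : ∀ r ∈ gropeRels g, τ r = 1) (hg : 0 < g) (k : ℕ) :
    τ (of (k, ⟨0, hg⟩, false)) = 1 := by
  set x : ℕ → α →₀ ℤ := fun l => (τ (of (l, ⟨0, hg⟩, false))).left.toAdd
  have hx (l : ℕ) : x l = 2 • x (l + 1) :=
    (map_relator_eq_one_iff τ hτ hg l).mp (hrels _ (relator_mem_gropeRels hg l))
  have hpow (j : ℕ) : x k = 2 ^ j • x (k + j) := by
    induction j with
    | zero => simp
    | succ j ih => rw [ih, hx, smul_smul, ← pow_succ, add_assoc]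
  have hright : (τ (of (k, ⟨0, hg⟩, false))).right = 1 := by
    simpa [sign] using congr($hτ (of (k, ⟨0, hg⟩, false)))
  have hleft : (τ (of (k, ⟨0, hg⟩, false))).left = 1 :=
    toAdd.injective <| Finsupp.eq_zero_of_forall_pow_smul (by norm_num) _ fun j => ⟨_, hpow j⟩
  rw [← SignExt.inl_left_of_right_eq_one hright, hleft, map_one]

def signExtGen (x : ℕ → A) (q : GropeGenerator g) : SignExt A :=
  if (q.2.1 : ℕ) = 0 then (if q.2.2 then inr (-1) else inl (ofAdd (x q.1))) else 1

lemma rightHom_comp_lift_signExtGen (x : ℕ → A) :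
    rightHom.comp (FreeGroup.lift (signExtGen (g := g) x)) = sign g := by
  refine FreeGroup.ext_hom _ _ fun ⟨k, i, b⟩ => ?_
  by_cases hi : (i : ℕ) = 0 <;> cases b <;> simp [signExtGen, sign, hi]

lemma map_comp_lift_signExtGen {B : Type*} [AddCommGroup B] (p : A →+ B) (x : ℕ → A) :
    (SignExt.map p).comp (FreeGroup.lift (signExtGen (g := g) x)) =
      FreeGroup.lift (signExtGen (p ∘ x)) := by
  refine FreeGroup.ext_hom _ _ fun ⟨k, i, b⟩ => ?_
  by_cases hi : (i : ℕ) = 0 <;> cases b <;> simp [signExtGen, SignExt.map, hi]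

lemma lift_signExtGen_eq_one_of_mem_gropeRels {x : ℕ → A} (hx : ∀ k, x k = 2 • x (k + 1))
    (r : FreeGroup (GropeGenerator g)) (hr : r ∈ gropeRels g) :
    FreeGroup.lift (signExtGen x) r = 1 := by
  obtain ⟨k, hg, rfl⟩ := hr
  refine (map_relator_eq_one_iff _ (rightHom_comp_lift_signExtGen x) hg k).mpr ?_
  simpa [signExtGen] using hx k

noncomputable def dyadic : (ℕ →₀ ℤ) →+ ℚ :=
  (Finsupp.linearCombination ℤ fun k : ℕ => (2 : ℚ)⁻¹ ^ k).toAddMonoidHom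

lemma dyadic_comp_single : dyadic ∘ (Finsupp.single · 1) = fun k : ℕ => (2 : ℚ)⁻¹ ^ k := by
  ext k
  simp [dyadic]

variable (g) in
noncomputable def toDyadic : GropeGroup g →* SignExt ℚ :=
  PresentedGroup.toGroup <|
    lift_signExtGen_eq_one_of_mem_gropeRels (x := fun k => (2 : ℚ)⁻¹ ^ k) fun k => by
      rw [two_nsmul, pow_succ]
      ring

lemma toDyadic_of (q : GropeGenerator g) :
    toDyadic g (PresentedGroup.of q) = signExtGen (fun k => (2 : ℚ)⁻¹ ^ k) q :=
  PresentedGroup.toGroup.of _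

lemma toDyadic_comp_mk : (toDyadic g).comp (PresentedGroup.mk _) =
    FreeGroup.lift (signExtGen fun k => (2 : ℚ)⁻¹ ^ k) :=
  FreeGroup.ext_hom _ _ fun q => (toDyadic_of q).trans FreeGroup.lift_apply_of.symm

lemma range_toDyadic_le : (toDyadic g).range ≤ (SignExt.map dyadic).range := by
  rintro _ ⟨y, rfl⟩
  obtain ⟨w, rfl⟩ := PresentedGroup.mk_surjective _ y
  refine ⟨FreeGroup.lift (signExtGen (Finsupp.single · 1)) w, ?_⟩
  rw [← MonoidHom.comp_apply, map_comp_lift_signExtGen, dyadic_comp_single, ← toDyadic_comp_mk]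
  rfl

theorem not_exists_lift_toDyadic (hg : 0 < g) :
    ¬ ∃ σ : GropeGroup g →* SignExt (ℕ →₀ ℤ), (SignExt.map dyadic).comp σ = toDyadic g := by
  rintro ⟨σ, hσ⟩
  let τ := σ.comp (PresentedGroup.mk (gropeRels g))
  have hτ : (SignExt.map dyadic).comp τ = FreeGroup.lift (signExtGen fun k => (2 : ℚ)⁻¹ ^ k) := by
    rw [← toDyadic_comp_mk, ← hσ]
    rfl
  have hsign : rightHom.comp τ = sign g := by
    rw [← rightHom_comp_lift_signExtGen fun k => (2 : ℚ)⁻¹ ^ k, ← hτ]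
    rfl
  have hrels (r) (hr : r ∈ gropeRels g) : τ r = 1 := by
    change σ (PresentedGroup.mk _ r) = 1
    rw [PresentedGroup.one_of_mem hr]
    exact map_one σ
  have h := congr(SignExt.map dyadic $(map_of_first_eq_one τ hsign hrels hg 0))
  rw [← MonoidHom.comp_apply, hτ, FreeGroup.lift_apply_of, map_one] at h
  simp [signExtGen, map_eq_one_iff _ inl_injective] at h

end GropeGroup

/-- **Lemma 6.4 (algebraic form)**: for every `g ≥ 1`, the group `G_g` is not free. -/
theorem gropeGroup_not_free (g : ℕ) (hg : 1 ≤ g) :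
    ¬ Nonempty (IsFreeGroup (GropeGroup g)) := by
  rintro ⟨hfree⟩
  exact GropeGroup.not_exists_lift_toDyadic hg <|
    IsFreeGroup.exists_lift_of_range_le _ _ GropeGroup.range_toDyadic_le
end
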